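/- Let β ∈ [-1,1] and let (σ_N^{(i)})_{i∈I} be a family of symmetric permutations of [N]² such that for all i ≠ i' ∈ I, lim_{N→∞} [#FP((σ_N^{(i')})⁻¹ ∘ σ_N^{(i)}) + #TP((σ_N^{(i')})⁻¹ ∘ σ_N^{(i)})]/N² = 0. Set M_N^{(i)} = W_N^{σ_N^{(i)}}. Then for every test graph T = (V,E,γ) in I that is a double tree, lim_{N→∞} ν⁰_N[T] = ∏ over twin-edge pairs {e,e'} of [1_{{e,e'} opposing and γ(e)=γ(e')} + β·1_{{e,e'} congruent and γ(e)=γ(e')}]. -/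

import Mathlib

open MeasureTheory Filter Finset

noncomputable section

namespace PermutedWigner

/-! ### Permutations of `[N]²` -/

/-- A permutation of `[N]²` is symmetric if it commutes with the transpose. -/
def SymmPerm {N : ℕ} (σ : Equiv.Perm (Fin N × Fin N)) : Prop :=
  ∀ p : Fin N × Fin N, σ (p.2, p.1) = ((σ p).2, (σ p).1)

/-- The set of fixed entries of a permutation of `[N]²`. -/
def FPset {N : ℕ} (σ : Equiv.Perm (Fin N × Fin N)) : Finset (Fin N × Fin N) :=
  univ.filter fun p => σ p = p

/-- The set of transposed entries of a permutation of `[N]²`. -/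
def TPset {N : ℕ} (σ : Equiv.Perm (Fin N × Fin N)) : Finset (Fin N × Fin N) :=
  univ.filter fun p => σ p = (p.2, p.1)

/-- The fixed entries in row `j`. -/
def FProw {N : ℕ} (σ : Equiv.Perm (Fin N × Fin N)) (j : Fin N) : Finset (Fin N) :=
  univ.filter fun k => σ (j, k) = (j, k)

/-- The transposed entries in row `j`. -/
def TProw {N : ℕ} (σ : Equiv.Perm (Fin N × Fin N)) (j : Fin N) : Finset (Fin N) :=
  univ.filter fun k => σ (j, k) = (k, j)

/-- The grid of an entry `(j,k)`: entries sharing a coordinate with `{j,k}`, except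
`(j,k)` and `(k,j)` themselves. -/
def GridPt {N : ℕ} (p : Fin N × Fin N) : Finset (Fin N × Fin N) :=
  (univ.filter fun q : Fin N × Fin N =>
      q.1 = p.1 ∨ q.1 = p.2 ∨ q.2 = p.1 ∨ q.2 = p.2) \ {p, (p.2, p.1)}

/-- The entries moved within their grid by `σ`. -/
def GridSet {N : ℕ} (σ : Equiv.Perm (Fin N × Fin N)) : Finset (Fin N × Fin N) :=
  univ.filter fun p => σ p ∈ GridPt p

/-- A sequence of permutations of `[N]²` stays off the grid if `#Grid(σ_N) = o(N²)`. -/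
def StaysOffGrid (σ : (N : ℕ) → Equiv.Perm (Fin N × Fin N)) : Prop :=
  Tendsto (fun N : ℕ => ((GridSet (σ N)).card : ℝ) / (N : ℝ) ^ 2) atTop (nhds 0)

/-- `lim_N max_{j∈[N]} f_N(j)/N = lim_N min_{j∈[N]} f_N(j)/N = a`, formulated as uniform
convergence of the row quantities `f_N(j)/N` to `a`. -/
def RowLimit (f : (N : ℕ) → Fin N → ℝ) (a : ℝ) : Prop :=
  ∀ ε > 0, ∀ᶠ N : ℕ in atTop, ∀ j : Fin N, |f N j / (N : ℝ) - a| < ε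

/-! ### Wigner matrices -/

/-- The data of a Wigner matrix ensemble with pseudovariance `β`: independent entries on and
above the diagonal, conjugate-symmetric entries, centered off-diagonal entries of unit variance
and pseudovariance `β`, real diagonal entries, and uniformly bounded moments of all orders. -/
structure WignerData (Ω : Type) [MeasureSpace Ω] (β : ℂ) where
  X : (N : ℕ) → Fin N × Fin N → Ω → ℂ
  m : ℕ → ℝ
  meas : ∀ N p, Measurable (X N p)
  indep : ∀ N : ℕ, ProbabilityTheory.iIndepFun
    (fun p : { p : Fin N × Fin N // p.1 ≤ p.2 } => X N p.val) volume
  conj_symm : ∀ (N : ℕ) (p : Fin N × Fin N) (ω : Ω),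
    X N (p.2, p.1) ω = (starRingEnd ℂ) (X N p ω)
  centered : ∀ (N : ℕ) (j k : Fin N), j < k → ∫ ω, X N (j, k) ω = 0
  variance : ∀ (N : ℕ) (j k : Fin N), j < k → ∫ ω, ‖X N (j, k) ω‖ ^ 2 = 1
  pseudovariance : ∀ (N : ℕ) (j k : Fin N), j < k → ∫ ω, (X N (j, k) ω) ^ 2 = β
  diag_real : ∀ (N : ℕ) (j : Fin N) (ω : Ω), (X N (j, j) ω).im = 0
  integrable_pow : ∀ (N : ℕ) (p : Fin N × Fin N) (ℓ : ℕ),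
    Integrable fun ω => ‖X N p ω‖ ^ ℓ
  moment_bound : ∀ (ℓ : ℕ) (N : ℕ) (p : Fin N × Fin N), (∫ ω, ‖X N p ω‖ ^ ℓ) ≤ m ℓ

variable {Ω : Type} [MeasureSpace Ω] {β : ℂ}

/-- The Wigner matrix `W_N(j,k) = X_N(j,k)/√N`. -/
def Wmat (D : WignerData Ω β) (N : ℕ) (ω : Ω) : Matrix (Fin N) (Fin N) ℂ :=
  fun j k => D.X N (j, k) ω / (Real.sqrt N : ℂ)

/-- The permuted Wigner matrix `W_N^σ(j,k) = W_N(σ(j,k))`. -/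
def WmatPerm (D : WignerData Ω β) (N : ℕ) (σ : Equiv.Perm (Fin N × Fin N)) (ω : Ω) :
    Matrix (Fin N) (Fin N) ℂ :=
  fun j k => Wmat D N ω (σ (j, k)).1 (σ (j, k)).2

/-! ### Test graphs and traffic distributions -/

/-- A test graph in `I`: a finite connected multidigraph with edges labeled by `I`. -/
structure TestGraph (I : Type) where
  V : Type
  E : Type
  fintypeV : Fintype V
  decEqV : DecidableEq V
  fintypeE : Fintype E
  nonemptyV : Nonempty V
  src : E → V
  tar : E → V
  lab : E → I
  connected : ∀ v w : V, Relation.ReflTransGen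
    (fun a b => ∃ e, (src e = a ∧ tar e = b) ∨ (src e = b ∧ tar e = a)) v w

attribute [instance] TestGraph.fintypeV TestGraph.decEqV TestGraph.fintypeE TestGraph.nonemptyV

variable {I : Type}

/-- The injective traffic distribution
`ν⁰_N[T] = (1/N) Σ_{φ : V ↪ [N]} E[∏_{e∈E} A^{γ(e)}(φ(tar e), φ(src e))]`. -/
def nu0 (T : TestGraph I) {N : ℕ} (A : I → Ω → Matrix (Fin N) (Fin N) ℂ) : ℂ :=
  (N : ℂ)⁻¹ * ∑ φ : T.V ↪ Fin N, ∫ ω, ∏ e : T.E, A (T.lab e) ω (φ (T.tar e)) (φ (T.src e))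

/-- Two edges have the same endpoints (as an unordered pair). -/
def SameEnds (T : TestGraph I) (e e' : T.E) : Prop :=
  (T.src e' = T.src e ∧ T.tar e' = T.tar e) ∨ (T.src e' = T.tar e ∧ T.tar e' = T.src e)

/-- The underlying undirected simple graph of a test graph. -/
def underlying (T : TestGraph I) : SimpleGraph T.V where
  Adj v w := v ≠ w ∧ ∃ e, (T.src e = v ∧ T.tar e = w) ∨ (T.src e = w ∧ T.tar e = v)
  symm := by
    constructor
    rintro v w ⟨hvw, e, h | h⟩
    · exact ⟨hvw.symm, e, Or.inr h⟩
    · exact ⟨hvw.symm, e, Or.inl h⟩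
  loopless := by constructor; rintro v ⟨h, -⟩; exact h rfl

open scoped Classical in
/-- A double tree: no loops, the underlying simple graph is a tree, and every pair of
adjacent vertices is joined by exactly two directed edges. -/
def IsDoubleTree (T : TestGraph I) : Prop :=
  (∀ e : T.E, T.src e ≠ T.tar e) ∧
  (∀ e : T.E, (univ.filter fun e' => SameEnds T e e').card = 2) ∧
  (underlying T).IsTree

/-- `t` pairs each edge with its twin. -/
def IsTwinInvolution (T : TestGraph I) (t : T.E → T.E) : Prop :=
  ∀ e, t e ≠ e ∧ t (t e) = e ∧ SameEnds T e (t e)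

/-- `S` selects exactly one edge from each twin pair of the pairing `t`. -/
def IsTwinSection (T : TestGraph I) (t : T.E → T.E) (S : Finset T.E) : Prop :=
  ∀ e, e ∈ S ↔ t e ∉ S

/-! ### Moments and noncrossing pairings -/

/-- `E[tr(A_1 ⋯ A_n)]`, the expected normalized trace of a word of random matrices. -/
def expTrWord {N n : ℕ} (A : Fin n → Ω → Matrix (Fin N) (Fin N) ℂ) : ℂ :=
  (N : ℂ)⁻¹ * ∫ ω, ((List.ofFn fun k => A k ω).prod).trace

open scoped Classical in
/-- `Σ_{π ∈ NC₂(n)} ∏_{{j,k} ∈ π} c(j,k)`: the sum over noncrossing pair partitions of `[n]`,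
encoded as fixed-point-free noncrossing involutions. -/
def ncSum (n : ℕ) (c : Fin n → Fin n → ℂ) : ℂ :=
  ∑ π : Equiv.Perm (Fin n),
    if (∀ j, π j ≠ j) ∧ (∀ j, π (π j) = j) ∧
        ¬∃ a b : Fin n, a < b ∧ b < π a ∧ π a < π b then
      ∏ j ∈ univ.filter fun j => j < π j, c j (π j)
    else 0

/-- The triple set in Popa's sufficient condition:
`{(j,k,l) : σ(j,k) ∈ {σ'(j,l), σ'(l,k)}}`. -/
def PopaSet {N : ℕ} (σ σ' : Equiv.Perm (Fin N × Fin N)) :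
    Finset (Fin N × Fin N × Fin N) :=
  univ.filter fun t =>
    σ (t.1, t.2.1) = σ' (t.1, t.2.2) ∨ σ (t.1, t.2.1) = σ' (t.2.2, t.2.1)

/-- A pair of sequences of random matrices converges in distribution to a semicircular family
of covariance `K`: all limiting mixed normalized-trace moments are given by sums over
noncrossing pair partitions of products of the corresponding covariance entries. -/
def ConvergesToSemicircular (M : (N : ℕ) → Fin 2 → Ω → Matrix (Fin N) (Fin N) ℂ)
    (K : Fin 2 → Fin 2 → ℝ) : Prop :=
  ∀ n : ℕ, 1 ≤ n → ∀ i : Fin n → Fin 2,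
    Tendsto (fun N : ℕ => expTrWord (fun k => M N (i k))) atTop
      (nhds (ncSum n fun j k => ((K (i j) (i k) : ℝ) : ℂ)))

/-- The permutation `ρ_N` fixing entries whose (1-based) max coordinate is odd and transposing
entries whose max coordinate is even. -/
def rho (N : ℕ) : Equiv.Perm (Fin N × Fin N) :=
  Function.Involutive.toPerm
    (fun p => if (max p.1.val p.2.val + 1) % 2 = 1 then p else (p.2, p.1))
    (by
      intro p
      dsimp only
      by_cases h : (max p.1.val p.2.val + 1) % 2 = 1
      · simp [h]
      · have h2 : ¬(max p.2.val p.1.val + 1) % 2 = 1 := by rw [max_comm]; exact h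
        simp [h, h2])

/-- The permutation `ζ_{N,n}` fixing entries with (1-based) `j + k ≡ 0 (mod n)` and transposing
all other entries. -/
def zeta (n N : ℕ) : Equiv.Perm (Fin N × Fin N) :=
  Function.Involutive.toPerm
    (fun p => if (p.1.val + p.2.val + 2) % n = 0 then p else (p.2, p.1))
    (by
      intro p
      dsimp only
      by_cases h : (p.1.val + p.2.val + 2) % n = 0
      · simp [h]
      · have h2 : ¬(p.2.val + p.1.val + 2) % n = 0 := by rw [Nat.add_comm p.2.val]; exact h
        simp [h, h2])

/-- The anti-diagonal transpose `(j,k) ↦ (N+1-k, N+1-j)` (1-based). -/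
def adt (N : ℕ) : Equiv.Perm (Fin N × Fin N) :=
  Function.Involutive.toPerm
    (fun p => (⟨N - 1 - p.2.val, by have := p.2.isLt; omega⟩,
               ⟨N - 1 - p.1.val, by have := p.1.isLt; omega⟩))
    (by
      intro p
      obtain ⟨⟨a, ha⟩, ⟨b, hb⟩⟩ := p
      simp only [Prod.ext_iff, Fin.ext_iff]
      omega)

/-- The defining equations (in 1-based coordinates) of the permutation `η_N` of Remark 3.4. -/
def EtaEquations (η : (N : ℕ) → Equiv.Perm (Fin N × Fin N)) : Prop :=
  ∀ N : ℕ,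
    (∀ (j k : Fin N) (_h1 : j.val + 1 < k.val) (_h2 : Even k.val),
      η N (j, k) = (k, ⟨j.val + 1, by have := k.isLt; omega⟩)) ∧
    (∀ (j k : Fin N) (_h1 : j.val + 1 = k.val) (_h2 : Even k.val),
      η N (j, k) = (k, ⟨0, by have := k.isLt; omega⟩)) ∧
    (∀ (j k : Fin N) (_h1 : 0 < j.val) (_h2 : j.val < k.val) (_h3 : Odd k.val),
      η N (j, k) = (k, ⟨j.val - 1, by have := k.isLt; omega⟩)) ∧
    (∀ (j k : Fin N) (_h1 : j.val = 0) (_h2 : j.val < k.val) (_h3 : Odd k.val),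
      η N (j, k) = (k, ⟨k.val - 1, by have := k.isLt; omega⟩)) ∧
    (∀ (j : Fin N) (_h : j.val + 1 < N),
      η N (j, j) = (⟨j.val + 1, by omega⟩, ⟨j.val + 1, by omega⟩)) ∧
    (∀ (j : Fin N) (_h : j.val + 1 = N),
      η N (j, j) = (⟨0, by have := j.isLt; omega⟩, ⟨0, by have := j.isLt; omega⟩)) ∧
    (∀ p : Fin N × Fin N, η N (p.2, p.1) = ((η N p).2, (η N p).1))


/-!
Since a double tree has `#E = 2 (#V - 1)`, `ν⁰_N[T] = N^{-#V} Σ_φ E[∏_e X_N(entry_φ e)]`, and by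
independence each expectation factorizes over the transpose classes of the entries read by `φ`.
For a good injection `φ` (all entries off the diagonal, classes shared only by twins with equal
labels) it is exactly the product of the twin factors: `E[X X̄] = 1` for opposing twins,
`E[X²] = β` for congruent ones, and a factor `E[X] = 0` when twins carry distinct labels. The
moment bounds make all expectations uniformly bounded, and the bad injections are `o(N^{#V})`:
a diagonal entry, or a coincidence of classes between edges on distinct vertex pairs, pins one
vertex to `O(1)` values, while a coincidence between differently labelled twins forces
`(φ (tar e), φ (src e))` into `FP ∪ TP` of `σ'⁻¹ σ`, which has `o(N²)` elements.
-/

open scoped Classical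

section Entries

variable {N : ℕ}

/-- Entries are identified up to transpose by their representative on or above the diagonal,
which indexes the independent family `WignerData.X`. -/
def canon (p : Fin N × Fin N) : Fin N × Fin N := if p.1 ≤ p.2 then p else p.swap

lemma canon_fst_le_snd (p : Fin N × Fin N) : (canon p).1 ≤ (canon p).2 := by
  unfold canon
  split_ifs with h
  · exact h
  · exact le_of_not_ge h

def canonUT (p : Fin N × Fin N) : {q : Fin N × Fin N // q.1 ≤ q.2} :=
  ⟨canon p, canon_fst_le_snd p⟩

lemma canon_eq_self_or_swap (p : Fin N × Fin N) : canon p = p ∨ canon p = p.swap := by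
  unfold canon
  split_ifs
  · exact Or.inl rfl
  · exact Or.inr rfl

lemma canon_swap (p : Fin N × Fin N) : canon p.swap = canon p := by
  unfold canon
  rcases lt_trichotomy p.1 p.2 with h | h | h
  · simp [h.le, not_le.mpr h]
  · simp [h, Prod.ext_iff]
  · simp [h.le, not_le.mpr h]

lemma eq_or_eq_swap_of_canon_eq {p q : Fin N × Fin N} (h : canon p = canon q) :
    q = p ∨ q = p.swap := by
  rcases canon_eq_self_or_swap p with hp | hp <;>
    rcases canon_eq_self_or_swap q with hq | hq <;>
    rw [hp, hq] at h <;> simp_all [Prod.ext_iff]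

def twist (p : Fin N × Fin N) : ℂ → ℂ := if p.1 ≤ p.2 then id else starRingEnd ℂ

lemma measurable_twist (p : Fin N × Fin N) : Measurable (twist p) := by
  unfold twist
  split_ifs
  · exact measurable_id
  · exact Complex.continuous_conj.measurable

variable (D : WignerData Ω β)

lemma X_swap (p : Fin N × Fin N) (ω : Ω) : D.X N p.swap ω = starRingEnd ℂ (D.X N p ω) :=
  D.conj_symm N p ω

lemma X_eq_conj_X_swap (p : Fin N × Fin N) (ω : Ω) :
    D.X N p ω = starRingEnd ℂ (D.X N p.swap ω) :=
  D.conj_symm N p.swap ω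

lemma X_eq_twist_X_canon (p : Fin N × Fin N) (ω : Ω) :
    D.X N p ω = twist p (D.X N (canon p) ω) := by
  unfold twist canon
  split_ifs
  · rfl
  · exact X_eq_conj_X_swap D p ω

lemma integral_prod_X {E : Type*} [Fintype E] (p : E → Fin N × Fin N) :
    ∫ ω, ∏ e, D.X N (p e) ω = ∏ r, ∫ ω, ∏ e with canonUT (p e) = r, D.X N (p e) ω := by
  set h : {q : Fin N × Fin N // q.1 ≤ q.2} → ℂ → ℂ :=
    fun r z => ∏ e with canonUT (p e) = r, twist (p e) z
  have hfiber : ∀ r ω, ∏ e with canonUT (p e) = r, D.X N (p e) ω = h r (D.X N r.1 ω) := by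
    intro r ω
    refine prod_congr rfl fun e he => ?_
    rw [X_eq_twist_X_canon D (p e), ← (mem_filter.1 he).2]
    rfl
  calc ∫ ω, ∏ e, D.X N (p e) ω = ∫ ω, ∏ r, h r (D.X N r.1 ω) := by
        simp only [← hfiber, prod_fiberwise]
    _ = ∏ r, ∫ ω, h r (D.X N r.1 ω) :=
        (D.indep N).integral_fun_prod_comp (fun r => (D.meas N r.1).aemeasurable)
          fun r => (Finset.measurable_prod _ fun e _ => measurable_twist (p e)).aestronglyMeasurable
    _ = _ := by simp only [hfiber]

lemma norm_X_swap (p : Fin N × Fin N) (ω : Ω) : ‖D.X N p.swap ω‖ = ‖D.X N p ω‖ := by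
  rw [X_eq_conj_X_swap D p.swap, Prod.swap_swap, RCLike.norm_conj]

lemma integral_X_of_ne {p : Fin N × Fin N} (hp : p.1 ≠ p.2) : ∫ ω, D.X N p ω = 0 := by
  rcases hp.lt_or_gt with h | h
  · exact D.centered N _ _ h
  · simp_rw [X_eq_conj_X_swap D p]
    rw [integral_conj, show ∫ ω, D.X N p.swap ω = 0 from D.centered N _ _ h, map_zero]

lemma integral_norm_X_sq_of_ne {p : Fin N × Fin N} (hp : p.1 ≠ p.2) :
    ∫ ω, ‖D.X N p ω‖ ^ 2 = 1 := by
  rcases hp.lt_or_gt with h | h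
  · exact D.variance N _ _ h
  · simp_rw [← norm_X_swap D p]
    exact D.variance N _ _ h

lemma integral_X_mul_X_swap_of_ne {p : Fin N × Fin N} (hp : p.1 ≠ p.2) :
    ∫ ω, D.X N p ω * D.X N p.swap ω = 1 := by
  simp_rw [X_swap D p, Complex.mul_conj', ← Complex.ofReal_pow]
  rw [integral_complex_ofReal, integral_norm_X_sq_of_ne D hp, Complex.ofReal_one]

lemma integral_X_mul_self_of_ne {β : ℝ} (D : WignerData Ω β) {p : Fin N × Fin N}
    (hp : p.1 ≠ p.2) : ∫ ω, D.X N p ω * D.X N p ω = β := by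
  simp_rw [← sq]
  rcases hp.lt_or_gt with h | h
  · exact D.pseudovariance N _ _ h
  · simp_rw [X_eq_conj_X_swap D p, ← map_pow]
    rw [integral_conj, show ∫ ω, D.X N p.swap ω ^ 2 = β from D.pseudovariance N _ _ h,
      Complex.conj_ofReal]

end Entries

lemma prod_le_one_add_sum_pow {ι : Type*} (s : Finset ι) {a : ι → ℝ} (ha : ∀ i ∈ s, 0 ≤ a i) :
    ∏ i ∈ s, a i ≤ 1 + ∑ i ∈ s, a i ^ #s := by
  rcases s.eq_empty_or_nonempty with rfl | hs
  · simp
  obtain ⟨j, hj, hmax⟩ := s.exists_max_image a hs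
  calc ∏ i ∈ s, a i ≤ ∏ _i ∈ s, a j := prod_le_prod ha hmax
    _ = a j ^ #s := prod_const _
    _ ≤ ∑ i ∈ s, a i ^ #s :=
        single_le_sum (f := fun i => a i ^ #s) (fun i hi => pow_nonneg (ha i hi) _) hj
    _ ≤ 1 + ∑ i ∈ s, a i ^ #s := le_add_of_nonneg_left zero_le_one

lemma norm_integral_prod_X_le [IsProbabilityMeasure (volume : Measure Ω)] (D : WignerData Ω β)
    {E : Type*} [Fintype E] {N : ℕ} (p : E → Fin N × Fin N) :
    ‖∫ ω, ∏ e, D.X N (p e) ω‖ ≤ 1 + Fintype.card E * D.m (Fintype.card E) := by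
  set k := Fintype.card E
  have hint : ∀ e, Integrable fun ω => ‖D.X N (p e) ω‖ ^ k := fun e => D.integrable_pow N (p e) k
  calc ‖∫ ω, ∏ e, D.X N (p e) ω‖ ≤ ∫ ω, ‖∏ e, D.X N (p e) ω‖ := norm_integral_le_integral_norm _
    _ ≤ ∫ ω, (1 + ∑ e, ‖D.X N (p e) ω‖ ^ k) :=
        integral_mono_of_nonneg (ae_of_all _ fun ω => norm_nonneg _)
          ((integrable_const 1).add (integrable_finsetSum _ fun e _ => hint e))
          (ae_of_all _ fun ω => by
            simp only [norm_prod]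
            exact prod_le_one_add_sum_pow _ fun e _ => norm_nonneg _)
    _ = 1 + ∑ e, ∫ ω, ‖D.X N (p e) ω‖ ^ k := by
        rw [integral_add (integrable_const 1) (integrable_finsetSum _ fun e _ => hint e),
          integral_finsetSum _ fun e _ => hint e]
        simp
    _ ≤ 1 + ∑ _e : E, D.m k := by
        gcongr with e
        exact D.moment_bound k N (p e)
    _ = 1 + k * D.m k := by simp [k]

section Counting

variable {V : Type*} [Fintype V] [DecidableEq V] {N : ℕ}

lemma card_le_mul_pow_of_card_agree_le (s : Finset (V ↪ Fin N)) (W : Finset V) (k : ℕ)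
    (h : ∀ ψ ∈ s, #{φ ∈ s | ∀ x ∈ W, φ x = ψ x} ≤ k) : #s ≤ k * N ^ #W := by
  calc #s ≤ k * #(s.image fun φ (x : W) => φ x) := by
        refine card_le_mul_card_image _ _ fun r hr => ?_
        obtain ⟨ψ, hψ, rfl⟩ := mem_image.1 hr
        refine (card_le_card fun φ hφ => ?_).trans (h ψ hψ)
        rw [mem_filter] at hφ ⊢
        exact ⟨hφ.1, fun x hx => congrFun hφ.2 ⟨x, hx⟩⟩
    _ ≤ k * N ^ #W := by
        gcongr
        exact (card_le_univ _).trans (by simp)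

lemma eq_of_eqOn_compl {φ φ' : V ↪ Fin N} {U : Finset V} (hU : ∀ x ∈ U, φ x = φ' x)
    (hUc : ∀ x ∈ Uᶜ, φ x = φ' x) : φ = φ' :=
  DFunLike.ext φ φ' fun x => if hx : x ∈ U then hU x hx else hUc x (mem_compl.2 hx)

lemma card_filter_mem_pair_mul_sq_le {u v : V} (huv : u ≠ v) (B : Finset (Fin N × Fin N)) :
    #{φ : V ↪ Fin N | (φ u, φ v) ∈ B} * N ^ 2 ≤ #B * N ^ Fintype.card V := by
  set s : Finset (V ↪ Fin N) := {φ | (φ u, φ v) ∈ B}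
  have hcard : #({u, v} : Finset V) = 2 := card_pair huv
  have hcount : #s ≤ #B * N ^ (Fintype.card V - 2) := by
    rw [← hcard, ← card_compl]
    refine card_le_mul_pow_of_card_agree_le s _ _ fun ψ _ => card_le_card_of_injOn
      (fun φ => (φ u, φ v)) (fun φ hφ => (mem_filter.1 (mem_filter.1 hφ).1).2)
      fun φ hφ φ' hφ' h => eq_of_eqOn_compl (U := {u, v}) (by simpa [Prod.ext_iff] using h)
        fun x hx => ((mem_filter.1 hφ).2 x hx).trans ((mem_filter.1 hφ').2 x hx).symm
  calc #s * N ^ 2 ≤ #B * N ^ (Fintype.card V - 2) * N ^ 2 := by gcongr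
    _ = #B * N ^ Fintype.card V := by
        rw [mul_assoc, pow_sub_mul_pow _ (hcard ▸ card_le_univ _)]

lemma card_filter_mem_of_forall_ne_mul_le (w : V) (K : (V ↪ Fin N) → Finset (Fin N)) (k : ℕ)
    (hk : ∀ φ, #(K φ) ≤ k) (hK : ∀ φ ψ : V ↪ Fin N, (∀ x ≠ w, φ x = ψ x) → K φ = K ψ) :
    #{φ : V ↪ Fin N | φ w ∈ K φ} * N ≤ k * N ^ Fintype.card V := by
  set s : Finset (V ↪ Fin N) := {φ | φ w ∈ K φ}
  have hcount : #s ≤ k * N ^ (Fintype.card V - 1) := by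
    rw [← card_singleton w, ← card_compl]
    refine card_le_mul_pow_of_card_agree_le s _ _ fun ψ _ => le_trans ?_ (hk ψ)
    refine card_le_card_of_injOn (fun φ => φ w) (fun φ hφ => ?_) fun φ hφ φ' hφ' h =>
      eq_of_eqOn_compl (U := {w}) (by simpa using h)
        fun x hx => ((mem_filter.1 hφ).2 x hx).trans ((mem_filter.1 hφ').2 x hx).symm
    obtain ⟨hφw, hagree⟩ := mem_filter.1 hφ
    rw [← hK φ ψ fun x hx => hagree x (by simpa using hx)]
    exact (mem_filter.1 hφw).2
  calc #s * N ≤ k * N ^ (Fintype.card V - 1) * N := by gcongr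
    _ = k * N ^ Fintype.card V := by
        rw [mul_assoc, ← pow_succ, Nat.sub_add_cancel (Fintype.card_pos_iff.2 ⟨w⟩)]

lemma tendsto_card_embedding_div_pow (V : Type*) [Fintype V] :
    Tendsto (fun N : ℕ => (Fintype.card (V ↪ Fin N) : ℝ) / (N : ℝ) ^ Fintype.card V) atTop
      (nhds 1) := by
  set n := Fintype.card V
  have hfactor : ∀ i : ℕ, Tendsto (fun N : ℕ => ((N - i : ℕ) : ℝ) / N) atTop (nhds 1) := by
    intro i
    have h : Tendsto (fun N : ℕ => 1 - (i : ℝ) / N) atTop (nhds 1) := by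
      simpa using tendsto_const_nhds.sub (tendsto_const_div_atTop_nhds_zero_nat (i : ℝ))
    refine h.congr' ?_
    filter_upwards [eventually_ge_atTop (i + 1)] with N hN
    have hN0 : (N : ℝ) ≠ 0 := by norm_cast; omega
    rw [Nat.cast_sub (by omega), sub_div, div_self hN0]
  have hprod := tendsto_finsetProd (range n) fun i _ => hfactor i
  rw [prod_const_one] at hprod
  refine hprod.congr fun N => ?_
  rw [Fintype.card_embedding_eq, Fintype.card_fin, Nat.descFactorial_eq_prod_range,
    prod_div_distrib, prod_const, card_range]
  push_cast
  rfl

end Counting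

section DoubleTree

variable {T : TestGraph I} {t : T.E → T.E} {S : Finset T.E}

lemma sym2_eq_iff_sameEnds {e f : T.E} :
    s(T.src e, T.tar e) = s(T.src f, T.tar f) ↔ SameEnds T e f := by
  rw [Sym2.eq_iff, SameEnds]
  constructor <;> rintro (⟨h1, h2⟩ | ⟨h1, h2⟩)
  exacts [Or.inl ⟨h1.symm, h2.symm⟩, Or.inr ⟨h2.symm, h1.symm⟩, Or.inl ⟨h1.symm, h2.symm⟩,
    Or.inr ⟨h2.symm, h1.symm⟩]

lemma eq_or_eq_twin_of_sameEnds (hT : IsDoubleTree T) (ht : IsTwinInvolution T t) {e f : T.E}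
    (h : SameEnds T e f) : f = e ∨ f = t e := by
  have hpair : ({e, t e} : Finset T.E) = ({f | SameEnds T e f} : Finset T.E) := by
    refine eq_of_subset_of_card_le (fun f hf => ?_) ?_
    · rcases mem_insert.1 hf with rfl | hf
      · exact mem_filter.2 ⟨mem_univ _, Or.inl ⟨rfl, rfl⟩⟩
      · exact mem_filter.2 ⟨mem_univ _, mem_singleton.1 hf ▸ (ht e).2.2⟩
    · rw [hT.2.1 e, card_pair (ht e).1.symm]
  have hf : f ∈ ({e, t e} : Finset T.E) := hpair ▸ mem_filter.2 ⟨mem_univ _, h⟩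
  simpa using hf

lemma twin_mem_iff_not_mem (hS : IsTwinSection T t S) (ht : IsTwinInvolution T t) (e : T.E) :
    t e ∈ S ↔ e ∉ S := by
  rw [hS (t e), (ht e).2.1]

lemma exists_mem_twinSection_lab_ne (hS : IsTwinSection T t S) (ht : IsTwinInvolution T t)
    (h : ¬ ∀ e, T.lab (t e) = T.lab e) : ∃ e ∈ S, T.lab (t e) ≠ T.lab e := by
  obtain ⟨e, he⟩ := not_forall.1 h
  by_cases heS : e ∈ S
  · exact ⟨e, heS, he⟩
  · exact ⟨t e, (twin_mem_iff_not_mem hS ht e).2 heS, by rw [(ht e).2.1]; exact Ne.symm he⟩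

lemma card_edges_eq_two_mul (ht : IsTwinInvolution T t) (hS : IsTwinSection T t S) :
    Fintype.card T.E = 2 * #S := by
  have htinj : Function.Injective t := Function.LeftInverse.injective fun e => (ht e).2.1
  have huniv : (univ : Finset T.E) = S ∪ S.image t := by
    refine (eq_univ_of_forall fun f => ?_).symm
    by_cases hf : f ∈ S
    · exact mem_union_left _ hf
    · exact mem_union_right _ (mem_image.2 ⟨t f, (twin_mem_iff_not_mem hS ht f).2 hf,
        (ht f).2.1⟩)
  have hdisj : Disjoint S (S.image t) := disjoint_left.2 fun f hf hf' => by
    obtain ⟨g, hg, rfl⟩ := mem_image.1 hf'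
    exact (hS g).1 hg hf
  rw [← card_univ, huniv, card_union_of_disjoint hdisj, card_image_of_injective S htinj, two_mul]

/-- The section `S` is in bijection with the edges of the underlying tree. -/
lemma card_twinSection_add_one (hT : IsDoubleTree T) (ht : IsTwinInvolution T t)
    (hS : IsTwinSection T t S) : #S + 1 = Fintype.card T.V := by
  rw [← hT.2.2.card_edgeFinset]
  congr 1
  refine card_bij (fun e _ => s(T.src e, T.tar e)) (fun e _ => ?_) (fun e he f hf hef => ?_)
    fun ed hed => ?_
  · exact SimpleGraph.mem_edgeFinset.2 ⟨hT.1 e, e, Or.inl ⟨rfl, rfl⟩⟩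
  · rcases eq_or_eq_twin_of_sameEnds hT ht (sym2_eq_iff_sameEnds.1 hef) with rfl | rfl
    · rfl
    · exact absurd hf ((hS e).1 he)
  · induction ed with
    | _ v w =>
      obtain ⟨-, f, hf⟩ := SimpleGraph.mem_edgeFinset.1 hed
      have hvw : s(T.src f, T.tar f) = s(v, w) := by
        rcases hf with ⟨rfl, rfl⟩ | ⟨rfl, rfl⟩
        exacts [rfl, Sym2.eq_swap]
      by_cases hfS : f ∈ S
      · exact ⟨f, hfS, hvw⟩
      · exact ⟨t f, (twin_mem_iff_not_mem hS ht f).2 hfS,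
          (sym2_eq_iff_sameEnds.2 ((ht f).2.2)).symm.trans hvw⟩

lemma card_edges_add_two (hT : IsDoubleTree T) (ht : IsTwinInvolution T t)
    (hS : IsTwinSection T t S) : Fintype.card T.E + 2 = 2 * Fintype.card T.V := by
  rw [card_edges_eq_two_mul ht hS, ← card_twinSection_add_one hT ht hS]
  ring

lemma exists_end_ne_ends (hT : IsDoubleTree T) {e f : T.E} (h : ¬ SameEnds T e f) :
    ∃ w, (w = T.src f ∨ w = T.tar f) ∧ w ≠ T.src e ∧ w ≠ T.tar e := by
  by_cases hsrc : T.src f ≠ T.src e ∧ T.src f ≠ T.tar e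
  · exact ⟨T.src f, Or.inl rfl, hsrc⟩
  · refine ⟨T.tar f, Or.inr rfl, fun htar => ?_, fun htar => ?_⟩ <;>
      rcases not_and_or.1 hsrc with hs | hs <;> rw [not_ne_iff] at hs
    · exact hT.1 f (hs.trans htar.symm)
    · exact h (Or.inr ⟨hs, htar⟩)
    · exact h (Or.inl ⟨hs, htar⟩)
    · exact hT.1 f (hs.trans htar.symm)

end DoubleTree

section GoodEmbeddings

variable (σ : I → (N : ℕ) → Equiv.Perm (Fin N × Fin N)) {T : TestGraph I} {t : T.E → T.E}
  {N : ℕ}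

def entry (T : TestGraph I) (φ : T.V ↪ Fin N) (e : T.E) : Fin N × Fin N :=
  σ (T.lab e) N (φ (T.tar e), φ (T.src e))

def IsGood (T : TestGraph I) (t : T.E → T.E) (φ : T.V ↪ Fin N) : Prop :=
  (∀ e, (entry σ T φ e).1 ≠ (entry σ T φ e).2) ∧
  ∀ e f, canon (entry σ T φ e) = canon (entry σ T φ f) → f = e ∨ (f = t e ∧ T.lab f = T.lab e)

def twinFactor (T : TestGraph I) (t : T.E → T.E) (β : ℂ) (e : T.E) : ℂ :=
  (if (T.src (t e) = T.tar e ∧ T.tar (t e) = T.src e) ∧ T.lab (t e) = T.lab e then 1 else 0) +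
    β * (if (T.src (t e) = T.src e ∧ T.tar (t e) = T.tar e) ∧ T.lab (t e) = T.lab e then 1 else 0)

lemma entry_twin_of_congruent (φ : T.V ↪ Fin N) {e : T.E}
    (h : T.src (t e) = T.src e ∧ T.tar (t e) = T.tar e) :
    entry σ T φ (t e) = σ (T.lab (t e)) N (φ (T.tar e), φ (T.src e)) := by
  simp only [entry, h]

lemma entry_twin_of_opposing (φ : T.V ↪ Fin N) {e : T.E} (hσ : SymmPerm (σ (T.lab (t e)) N))
    (h : T.src (t e) = T.tar e ∧ T.tar (t e) = T.src e) :
    entry σ T φ (t e) = (σ (T.lab (t e)) N (φ (T.tar e), φ (T.src e))).swap := by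
  simp only [entry, h]
  exact hσ (φ (T.tar e), φ (T.src e))

lemma canon_entry_twin (hsymm : ∀ i N, SymmPerm (σ i N)) (ht : IsTwinInvolution T t)
    (φ : T.V ↪ Fin N) (e : T.E) :
    canon (entry σ T φ (t e)) = canon (σ (T.lab (t e)) N (φ (T.tar e), φ (T.src e))) := by
  rcases (ht e).2.2 with h | h
  · rw [entry_twin_of_congruent σ φ h]
  · rw [entry_twin_of_opposing σ φ (hsymm _ N) h, canon_swap]

lemma integral_X_entry_mul_X_entry_twin {β : ℝ} (D : WignerData Ω β)
    (hsymm : ∀ i N, SymmPerm (σ i N)) (hT : IsDoubleTree T) (ht : IsTwinInvolution T t)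
    (φ : T.V ↪ Fin N) {e : T.E} (hlab : T.lab (t e) = T.lab e)
    (hoff : (entry σ T φ e).1 ≠ (entry σ T φ e).2) :
    ∫ ω, D.X N (entry σ T φ e) ω * D.X N (entry σ T φ (t e)) ω = twinFactor T t β e := by
  rcases (ht e).2.2 with h | h
  · have hopp : ¬ (T.src (t e) = T.tar e ∧ T.tar (t e) = T.src e) :=
      fun h' => hT.1 e (h.1.symm.trans h'.1)
    rw [entry_twin_of_congruent σ φ h, hlab, twinFactor, if_neg fun h' => hopp h'.1,
      if_pos ⟨h, hlab⟩]
    refine (integral_X_mul_self_of_ne D hoff).trans ?_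
    ring
  · have hcong : ¬ (T.src (t e) = T.src e ∧ T.tar (t e) = T.tar e) :=
      fun h' => hT.1 e (h'.1.symm.trans h.1)
    rw [entry_twin_of_opposing σ φ (hsymm _ N) h, hlab, twinFactor, if_pos ⟨h, hlab⟩,
      if_neg fun h' => hcong h'.1]
    refine (integral_X_mul_X_swap_of_ne D hoff).trans ?_
    ring

/-- The entry read by `e` is alone in its transpose class, and centered. -/
lemma integral_prod_X_entry_eq_zero_of_isGood_of_lab_ne (D : WignerData Ω β)
    {φ : T.V ↪ Fin N} (hφ : IsGood σ T t φ) {e : T.E} (he : T.lab (t e) ≠ T.lab e) :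
    ∫ ω, ∏ e, D.X N (entry σ T φ e) ω = 0 := by
  rw [integral_prod_X]
  have hfiber :
      ({f | canonUT (entry σ T φ f) = canonUT (entry σ T φ e)} : Finset T.E) = {e} := by
    ext f
    simp only [mem_filter, mem_univ, true_and, mem_singleton]
    refine ⟨fun h => (hφ.2 e f (congrArg Subtype.val h).symm).resolve_right ?_, fun h => h ▸ rfl⟩
    rintro ⟨rfl, h'⟩
    exact he h'
  exact prod_eq_zero (mem_univ (canonUT (entry σ T φ e)))
    (by simp [hfiber, integral_X_of_ne D (hφ.1 e)])

/-- When all twins carry equal labels, each twin pair forms its own transpose class. -/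
lemma integral_prod_X_entry_of_isGood [IsProbabilityMeasure (volume : Measure Ω)] {β : ℝ}
    (D : WignerData Ω β) (hsymm : ∀ i N, SymmPerm (σ i N)) (hT : IsDoubleTree T)
    (ht : IsTwinInvolution T t) {S : Finset T.E} (hS : IsTwinSection T t S)
    {φ : T.V ↪ Fin N} (hφ : IsGood σ T t φ) :
    ∫ ω, ∏ e, D.X N (entry σ T φ e) ω = ∏ e ∈ S, twinFactor T t β e := by
  by_cases hlab : ∀ e, T.lab (t e) = T.lab e
  swap
  · obtain ⟨e, heS, he⟩ := exists_mem_twinSection_lab_ne hS ht hlab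
    rw [integral_prod_X_entry_eq_zero_of_isGood_of_lab_ne σ D hφ he,
      prod_eq_zero heS (by simp [twinFactor, he])]
  rw [integral_prod_X]
  set cl : T.E → {q : Fin N × Fin N // q.1 ≤ q.2} := fun e => canonUT (entry σ T φ e)
  change ∏ r, ∫ ω, ∏ e with cl e = r, D.X N (entry σ T φ e) ω = _
  have hcl : ∀ e f, cl f = cl e → f = e ∨ f = t e :=
    fun e f h => (hφ.2 e f (congrArg Subtype.val h).symm).imp_right And.left
  have hcl_twin : ∀ e, cl (t e) = cl e := fun e => Subtype.ext <| by
    change canon _ = canon _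
    rw [canon_entry_twin σ hsymm ht, hlab]
    rfl
  have hfiber : ∀ e, ({f | cl f = cl e} : Finset T.E) = {e, t e} := fun e => by
    ext f
    simp only [mem_filter, mem_univ, true_and, mem_insert, mem_singleton]
    refine ⟨hcl e f, ?_⟩
    rintro (rfl | rfl)
    exacts [rfl, hcl_twin e]
  rw [← prod_coe_sort S]
  refine (Fintype.prod_of_injective (fun e : S => cl e) (fun e e' h => ?_) _ _
    (fun r hr => ?_) fun e => ?_).symm
  · rcases hcl e e' h.symm with h' | h'
    · exact (Subtype.ext h').symm
    · exact absurd (h' ▸ e'.2) ((hS e).1 e.2)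
  · have hempty : ({f | cl f = r} : Finset T.E) = ∅ := by
      refine filter_eq_empty_iff.2 fun f _ hf => hr ?_
      by_cases hfS : f ∈ S
      · exact ⟨⟨f, hfS⟩, hf⟩
      · exact ⟨⟨t f, (twin_mem_iff_not_mem hS ht f).2 hfS⟩, (hcl_twin f).trans hf⟩
    simp [hempty]
  · simp only [hfiber, prod_pair (ht e).1.symm]
    rw [integral_X_entry_mul_X_entry_twin σ D hsymm hT ht φ (hlab e) (hφ.1 e)]

end GoodEmbeddings

section BadEmbeddings

lemma mem_FPset_union_TPset_of_canon_eq {N : ℕ} {σ₁ σ₂ : Equiv.Perm (Fin N × Fin N)}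
    (hσ₂ : SymmPerm σ₂) {q : Fin N × Fin N} (h : canon (σ₁ q) = canon (σ₂ q)) :
    q ∈ FPset (σ₂⁻¹ * σ₁) ∪ TPset (σ₂⁻¹ * σ₁) := by
  simp only [FPset, TPset, mem_union, mem_filter, mem_univ, true_and, Equiv.Perm.mul_apply,
    Equiv.Perm.inv_eq_iff_eq]
  rcases eq_or_eq_swap_of_canon_eq h with h' | h'
  · exact Or.inl h'.symm
  · exact Or.inr ((hσ₂ q).trans (congrArg Prod.swap h')).symm

lemma tendsto_div_pow_of_mul_le {a b : ℕ → ℕ} {j n : ℕ} (h : ∀ N, a N * N ^ j ≤ b N * N ^ n)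
    (hb : Tendsto (fun N : ℕ => (b N : ℝ) / (N : ℝ) ^ j) atTop (nhds 0)) :
    Tendsto (fun N : ℕ => (a N : ℝ) / (N : ℝ) ^ n) atTop (nhds 0) := by
  refine squeeze_zero' (Eventually.of_forall fun N => by positivity) ?_ hb
  filter_upwards [eventually_gt_atTop 0] with N hN
  rw [div_le_div_iff₀ (by positivity) (by positivity)]
  exact_mod_cast h N

variable (σ : I → (N : ℕ) → Equiv.Perm (Fin N × Fin N)) {T : TestGraph I} {t : T.E → T.E}

def OverlapsVanish : Prop :=
  ∀ i i' : I, i ≠ i' →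
    Tendsto (fun N : ℕ =>
        (((FPset ((σ i' N)⁻¹ * σ i N)).card : ℝ) +
          ((TPset ((σ i' N)⁻¹ * σ i N)).card : ℝ)) / (N : ℝ) ^ 2) atTop (nhds 0)

lemma card_entry_diag_mul_le (hT : IsDoubleTree T) (e : T.E) (N : ℕ) :
    #{φ : T.V ↪ Fin N | (entry σ T φ e).1 = (entry σ T φ e).2} * N ≤ N ^ Fintype.card T.V := by
  set τ := σ (T.lab e) N
  set B : Finset (Fin N × Fin N) := {q | (τ q).1 = (τ q).2}
  have hB : #B ≤ N := by
    simpa using card_le_card_of_injOn (fun q => (τ q).1) (t := univ) (fun _ _ => mem_univ _)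
      fun q hq q' hq' h => τ.injective <| Prod.ext h <| by
        rw [← (mem_filter.1 hq).2, ← (mem_filter.1 hq').2]
        exact h
  have hset : ({φ : T.V ↪ Fin N | (entry σ T φ e).1 = (entry σ T φ e).2} : Finset _) =
      ({φ : T.V ↪ Fin N | (φ (T.tar e), φ (T.src e)) ∈ B} : Finset _) :=
    filter_congr fun φ _ => by simp [B, entry, τ]
  rcases N.eq_zero_or_pos with rfl | hN
  · simp
  refine Nat.le_of_mul_le_mul_right ?_ hN
  calc _ = #{φ : T.V ↪ Fin N | (φ (T.tar e), φ (T.src e)) ∈ B} * N ^ 2 := by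
        rw [hset, sq, mul_assoc]
    _ ≤ #B * N ^ Fintype.card T.V := card_filter_mem_pair_mul_sq_le (Ne.symm (hT.1 e)) B
    _ ≤ N ^ Fintype.card T.V * N := by rw [mul_comm]; gcongr

lemma card_twin_coincide_mul_sq_le (hsymm : ∀ i N, SymmPerm (σ i N)) (hT : IsDoubleTree T)
    (ht : IsTwinInvolution T t) (e : T.E) (N : ℕ) :
    #{φ : T.V ↪ Fin N | canon (entry σ T φ e) = canon (entry σ T φ (t e))} * N ^ 2 ≤
      (#(FPset ((σ (T.lab (t e)) N)⁻¹ * σ (T.lab e) N)) +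
        #(TPset ((σ (T.lab (t e)) N)⁻¹ * σ (T.lab e) N))) * N ^ Fintype.card T.V := by
  calc _ ≤ #{φ : T.V ↪ Fin N | (φ (T.tar e), φ (T.src e)) ∈
        FPset ((σ (T.lab (t e)) N)⁻¹ * σ (T.lab e) N) ∪
          TPset ((σ (T.lab (t e)) N)⁻¹ * σ (T.lab e) N)} * N ^ 2 := by
        gcongr with φ
        rw [canon_entry_twin σ hsymm ht]
        exact mem_FPset_union_TPset_of_canon_eq (hsymm _ N)
    _ ≤ _ := card_filter_mem_pair_mul_sq_le (Ne.symm (hT.1 e)) _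
    _ ≤ _ := by gcongr; exact card_union_le _ _

/-- If `f` has an endpoint `w` off the ends of `e`, the coincidence of their transpose classes
pins `φ w` to one of four values determined by `φ` off `w`. -/
lemma card_coincide_mul_le_of_not_sameEnds (hT : IsDoubleTree T) {e f : T.E}
    (hef : ¬ SameEnds T e f) (N : ℕ) :
    #{φ : T.V ↪ Fin N | canon (entry σ T φ e) = canon (entry σ T φ f)} * N ≤
      4 * N ^ Fintype.card T.V := by
  obtain ⟨w, hw, hwe₁, hwe₂⟩ := exists_end_ne_ends hT hef
  set τ := σ (T.lab f) N
  set K : (T.V ↪ Fin N) → Finset (Fin N) := fun φ =>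
    {(τ⁻¹ (entry σ T φ e)).1, (τ⁻¹ (entry σ T φ e)).2,
      (τ⁻¹ (entry σ T φ e).swap).1, (τ⁻¹ (entry σ T φ e).swap).2}
  calc _ ≤ #{φ : T.V ↪ Fin N | φ w ∈ K φ} * N := by
        gcongr with φ
        intro h
        have hf : (φ (T.tar f), φ (T.src f)) = τ⁻¹ (entry σ T φ e) ∨
            (φ (T.tar f), φ (T.src f)) = τ⁻¹ (entry σ T φ e).swap :=
          (eq_or_eq_swap_of_canon_eq h).imp Equiv.Perm.eq_inv_iff_eq.2
            Equiv.Perm.eq_inv_iff_eq.2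
        rcases hw with rfl | rfl <;> rcases hf with hf | hf <;>
          simp only [K, ← hf, mem_insert, mem_singleton, true_or, or_true]
    _ ≤ 4 * N ^ Fintype.card T.V :=
        card_filter_mem_of_forall_ne_mul_le w K 4 (fun φ => card_le_four) fun φ ψ h => by
          simp only [K, entry, h (T.tar e) (Ne.symm hwe₂), h (T.src e) (Ne.symm hwe₁)]

lemma tendsto_card_coincide_div (hsymm : ∀ i N, SymmPerm (σ i N))
    (hvanish : OverlapsVanish σ) (hT : IsDoubleTree T) (ht : IsTwinInvolution T t) (e f : T.E) :
    Tendsto (fun N : ℕ => (#{φ : T.V ↪ Fin N | canon (entry σ T φ e) = canon (entry σ T φ f) ∧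
        ¬ (f = e ∨ (f = t e ∧ T.lab f = T.lab e))} : ℝ) / (N : ℝ) ^ Fintype.card T.V)
      atTop (nhds 0) := by
  by_cases hef : SameEnds T e f
  · rcases eq_or_eq_twin_of_sameEnds hT ht hef with rfl | rfl
    · simp
    by_cases hlab : T.lab (t e) = T.lab e
    · simp [hlab]
    refine tendsto_div_pow_of_mul_le (j := 2) (fun N => le_trans ?_
      (card_twin_coincide_mul_sq_le σ hsymm hT ht e N)) ?_
    · gcongr with φ
      exact And.left
    · simpa using hvanish (T.lab e) (T.lab (t e)) (Ne.symm hlab)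
  · refine tendsto_div_pow_of_mul_le (j := 1) (b := fun _ => 4) (fun N => le_trans ?_
      (card_coincide_mul_le_of_not_sameEnds σ hT hef N)) ?_
    · rw [pow_one]
      gcongr with φ
      exact And.left
    · simpa only [Nat.cast_ofNat, pow_one] using tendsto_const_div_atTop_nhds_zero_nat (4 : ℝ)

lemma tendsto_card_not_isGood_div (hsymm : ∀ i N, SymmPerm (σ i N))
    (hvanish : OverlapsVanish σ) (hT : IsDoubleTree T) (ht : IsTwinInvolution T t) :
    Tendsto (fun N : ℕ => (#{φ : T.V ↪ Fin N | ¬ IsGood σ T t φ} : ℝ) /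
      (N : ℝ) ^ Fintype.card T.V) atTop (nhds 0) := by
  have hdiag : ∀ e, Tendsto (fun N : ℕ =>
      (#{φ : T.V ↪ Fin N | (entry σ T φ e).1 = (entry σ T φ e).2} : ℝ) /
        (N : ℝ) ^ Fintype.card T.V) atTop (nhds 0) := fun e =>
    tendsto_div_pow_of_mul_le (j := 1) (b := fun _ => 1)
      (fun N => by simpa using card_entry_diag_mul_le σ hT e N)
      (by simpa only [Nat.cast_one, pow_one] using tendsto_const_div_atTop_nhds_zero_nat (1 : ℝ))
  have hsum := (tendsto_finsetSum univ fun e _ => hdiag e).add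
    (tendsto_finsetSum univ fun (p : T.E × T.E) _ =>
      tendsto_card_coincide_div σ hsymm hvanish hT ht p.1 p.2)
  simp only [sum_const_zero, add_zero] at hsum
  refine squeeze_zero (fun N => by positivity) (fun N => ?_) hsum
  rw [← sum_div, ← sum_div, ← add_div]
  gcongr
  rw [← Nat.cast_sum, ← Nat.cast_sum, ← Nat.cast_add, Nat.cast_le]
  refine le_trans (card_le_card fun φ hφ => ?_)
    ((card_union_le _ _).trans (add_le_add card_biUnion_le card_biUnion_le))
  simp only [IsGood, not_and_or, not_forall, mem_filter, mem_univ, true_and] at hφ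
  rcases hφ with ⟨e, he⟩ | ⟨e, f, hef, he⟩
  · exact mem_union_left _ (mem_biUnion.2 ⟨e, mem_univ _, mem_filter.2 ⟨mem_univ _, not_not.1 he⟩⟩)
  · exact mem_union_right _ (mem_biUnion.2 ⟨(e, f), mem_univ _, mem_filter.2 ⟨mem_univ _, hef, he⟩⟩)

end BadEmbeddings

lemma tendsto_inv_mul_sum_of_eq_off {α : ℕ → Type*} [∀ N, Fintype (α N)] {F : ∀ N, α N → ℂ}
    {L : ℂ} {C : ℝ} {c : ℕ → ℝ} (bad : ∀ N, Finset (α N)) (hc : ∀ N, 0 ≤ c N)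
    (hcard : Tendsto (fun N => (Fintype.card (α N) : ℝ) / c N) atTop (nhds 1))
    (hbad : Tendsto (fun N => (#(bad N) : ℝ) / c N) atTop (nhds 0))
    (hF : ∀ N x, ‖F N x‖ ≤ C) (hgood : ∀ N x, x ∉ bad N → F N x = L) :
    Tendsto (fun N => (c N : ℂ)⁻¹ * ∑ x, F N x) atTop (nhds L) := by
  have hsplit : ∀ N, (c N : ℂ)⁻¹ * ∑ x, F N x =
      (((Fintype.card (α N) : ℝ) / c N : ℝ) : ℂ) * L + (c N : ℂ)⁻¹ * ∑ x ∈ bad N, (F N x - L) := by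
    intro N
    have h : ∑ x ∈ bad N, (F N x - L) = ∑ x, (F N x - L) :=
      sum_subset (subset_univ _) fun x _ hx => by rw [hgood N x hx, sub_self]
    rw [h, sum_sub_distrib, sum_const, card_univ, nsmul_eq_mul]
    push_cast
    ring
  have herr : Tendsto (fun N => (c N : ℂ)⁻¹ * ∑ x ∈ bad N, (F N x - L)) atTop (nhds 0) := by
    refine squeeze_zero_norm (fun N => ?_) (by simpa using hbad.mul_const (C + ‖L‖))
    rw [norm_mul, norm_inv, Complex.norm_real, Real.norm_of_nonneg (hc N), div_mul_eq_mul_div,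
      inv_mul_eq_div]
    refine div_le_div_of_nonneg_right ?_ (hc N)
    calc ‖∑ x ∈ bad N, (F N x - L)‖ ≤ ∑ x ∈ bad N, ‖F N x - L‖ := norm_sum_le _ _
      _ ≤ ∑ _x ∈ bad N, (C + ‖L‖) :=
          sum_le_sum fun x _ => (norm_sub_le _ _).trans (by gcongr; exact hF N x)
      _ = #(bad N) * (C + ‖L‖) := by rw [sum_const, nsmul_eq_mul]
  simpa [hsplit] using (((Complex.continuous_ofReal.tendsto 1).comp hcard).mul_const L).add herr

lemma nu0_wmatPerm_eq (D : WignerData Ω β) (σ : I → (N : ℕ) → Equiv.Perm (Fin N × Fin N))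
    (T : TestGraph I) (hE : Fintype.card T.E + 2 = 2 * Fintype.card T.V) (N : ℕ) :
    nu0 T (fun i ω => WmatPerm D N (σ i N) ω) =
      ((N : ℂ) ^ Fintype.card T.V)⁻¹ * ∑ φ : T.V ↪ Fin N, ∫ ω, ∏ e, D.X N (entry σ T φ e) ω := by
  set s : ℂ := ((Real.sqrt N : ℝ) : ℂ)
  have hscale : (N : ℂ) * s ^ Fintype.card T.E = (N : ℂ) ^ Fintype.card T.V := by
    have hsq : s ^ 2 = N := by
      rw [← Complex.ofReal_pow, Real.sq_sqrt (Nat.cast_nonneg N), Complex.ofReal_natCast]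
    rw [← hsq, ← pow_add, add_comm, hE, pow_mul]
  have hterm : ∀ (φ : T.V ↪ Fin N) ω,
      ∏ e, WmatPerm D N (σ (T.lab e) N) ω (φ (T.tar e)) (φ (T.src e)) =
        (∏ e, D.X N (entry σ T φ e) ω) / s ^ Fintype.card T.E := fun φ ω => by
    simp only [WmatPerm, Wmat, prod_div_distrib, prod_const, card_univ]
    rfl
  simp only [nu0, hterm, integral_div, ← sum_div, ← hscale, mul_inv]
  ring

open scoped Classical in
theorem statement11_general
    {Ω : Type} [MeasureSpace Ω] [IsProbabilityMeasure (volume : Measure Ω)] {I : Type}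
    (β : ℝ) (D : WignerData Ω (β : ℂ))
    (σ : I → (N : ℕ) → Equiv.Perm (Fin N × Fin N))
    (hsymm : ∀ (i : I) (N : ℕ), SymmPerm (σ i N))
    (hvanish : ∀ i i' : I, i ≠ i' →
      Tendsto (fun N : ℕ =>
          (((FPset ((σ i' N)⁻¹ * σ i N)).card : ℝ) +
            ((TPset ((σ i' N)⁻¹ * σ i N)).card : ℝ)) / (N : ℝ) ^ 2) atTop (nhds 0)) :
    ∀ T : TestGraph I, IsDoubleTree T → ∀ (t : T.E → T.E) (S : Finset T.E),
      IsTwinInvolution T t → IsTwinSection T t S →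
      Tendsto (fun N : ℕ => nu0 T (fun i ω => WmatPerm D N (σ i N) ω)) atTop
        (nhds (∏ e ∈ S,
            ((if (T.src (t e) = T.tar e ∧ T.tar (t e) = T.src e) ∧ T.lab (t e) = T.lab e then
                (1 : ℂ)
              else 0) +
             (β : ℂ) *
              (if (T.src (t e) = T.src e ∧ T.tar (t e) = T.tar e) ∧ T.lab (t e) = T.lab e then
                (1 : ℂ)
              else 0)))) := by
  intro T hT t S htw hsec
  refine (tendsto_inv_mul_sum_of_eq_off (fun N => {φ | ¬ IsGood σ T t φ})
    (fun N => by positivity) (tendsto_card_embedding_div_pow T.V)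
    (tendsto_card_not_isGood_div σ hsymm hvanish hT htw)
    (fun N φ => norm_integral_prod_X_le D _)
    fun N φ hφ => integral_prod_X_entry_of_isGood σ D hsymm hT htw hsec (by simpa using hφ)).congr
    fun N => ?_
  rw [nu0_wmatPerm_eq D σ T (card_edges_add_two hT htw hsec)]
  push_cast
  rfl

open scoped Classical in
theorem statement11
    {Ω : Type} [MeasureSpace Ω] [IsProbabilityMeasure (volume : Measure Ω)] {I : Type}
    (β : ℝ) (hβ : β ∈ Set.Icc (-1 : ℝ) 1) (D : WignerData Ω (β : ℂ))
    (σ : I → (N : ℕ) → Equiv.Perm (Fin N × Fin N))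
    (hsymm : ∀ (i : I) (N : ℕ), SymmPerm (σ i N))
    (hvanish : ∀ i i' : I, i ≠ i' →
      Tendsto (fun N : ℕ =>
          (((FPset ((σ i' N)⁻¹ * σ i N)).card : ℝ) +
            ((TPset ((σ i' N)⁻¹ * σ i N)).card : ℝ)) / (N : ℝ) ^ 2) atTop (nhds 0)) :
    ∀ T : TestGraph I, IsDoubleTree T → ∀ (t : T.E → T.E) (S : Finset T.E),
      IsTwinInvolution T t → IsTwinSection T t S →
      Tendsto (fun N : ℕ => nu0 T (fun i ω => WmatPerm D N (σ i N) ω)) atTop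
        (nhds (∏ e ∈ S,
            ((if (T.src (t e) = T.tar e ∧ T.tar (t e) = T.src e) ∧ T.lab (t e) = T.lab e then
                (1 : ℂ)
              else 0) +
             (β : ℂ) *
              (if (T.src (t e) = T.src e ∧ T.tar (t e) = T.tar e) ∧ T.lab (t e) = T.lab e then
                (1 : ℂ)
              else 0)))) :=
  statement11_general β D σ hsymm hvanish

end PermutedWigner
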